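/- Let m ≥ 1, 0 ≤ r ≤ m, and 0 ≤ u ≤ m be integers. Let g be a codeword of RM(m,r) whose Hamming weight w satisfies w ≥ 2^{m−u}. Then the number of codewords h ∈ RM(m,r) such that supp(g) ⊆ supp(h) (i.e., h(z) = 1 for every evaluation point z with g(z) = 1) is at most 2^{C(m,≤r) − C(m−u,≤r)}, where C(a, ≤ b) := Σ_{i=0}^{b} C(a, i) and C(a,i) is the binomial coefficient. -/

import Mathlib

/-- The `m`-bit binary representation (MSB first) of the coordinate index `s`,
as an evaluation point in `F₂^m` (lexicographic coordinate ordering). -/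
def bitRepr (m : ℕ) (s : ℕ) : Fin m → ZMod 2 :=
  fun j => if Nat.testBit s (m - 1 - (j : ℕ)) then 1 else 0

/-- Evaluation of an `m`-variate polynomial over `F₂` at all points of `F₂^m`,
listed in lexicographic order, as a linear map. -/
noncomputable def evalRM (m : ℕ) :
    MvPolynomial (Fin m) (ZMod 2) →ₗ[ZMod 2] (Fin (2 ^ m) → ZMod 2) :=
  LinearMap.pi fun s => (MvPolynomial.aeval (bitRepr m (s : ℕ))).toLinearMap

/-- The Reed-Muller code RM(m,r): evaluation vectors of polynomials of total degree ≤ r. -/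
noncomputable def RM (m r : ℕ) : Submodule (ZMod 2) (Fin (2 ^ m) → ZMod 2) :=
  (MvPolynomial.restrictTotalDegree (Fin m) (ZMod 2) r).map (evalRM m)

/-- A word `w` satisfies the `(d,∞)`-RLL constraint: any two 1s are separated by at least d 0s. -/
def RLL (d : ℕ) {n : ℕ} (w : Fin n → ZMod 2) : Prop :=
  ∀ i j : Fin n, w i = 1 → (i : ℕ) < (j : ℕ) → (j : ℕ) ≤ (i : ℕ) + d → w j = 0

/-!
Adding `g` maps the codewords `h` with `supp g ⊆ supp h` injectively into the subcode of
`RM(m,r)` vanishing on `supp g`, whose dimension is `dim RM(m,r) - dim RM(m,r)|_{supp g}`.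
The squarefree monomials of degree `≤ r` span `RM(m,r)`, so `dim RM(m,r) ≤ C(m,≤r)`.

For the second term, by induction on the number of points, the functions of degree `< r` on any
`t` points of `F₂^σ` have rank at least `N_r(t)` (`lowWeightCount r t`), the number of `i < t`
with fewer than `r` ones in binary. Split the points along a
coordinate `xᵢ` into a larger fiber `xᵢ = c` of size `a` and a smaller one `xᵢ = c + 1` of size
`b`: functions of degree `< r + 1` realise rank `N_{r+1}(a)` on the first fiber, and the products
`(xᵢ + c) v` with `deg v < r` vanish there and realise rank `N_r(b)` on the second. It remains to
check `N_{r+1}(a + b) ≤ N_{r+1}(a) + N_r(b)` for `b ≤ a`, which follows by induction from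
`N_{r+1}(t) = N_{r+1}(⌈t/2⌉) + N_r(⌊t/2⌋)`. Finally `N_{r+1}(2^(m-u)) = C(m-u,≤r)`.
-/

open Finset Module

-- A strict bound, so that `lowWeightCount 0 = 0` and `succ_left` holds for every `r`; degree
-- `≤ r` corresponds to `r + 1`.
def lowWeightCount (r t : ℕ) : ℕ := #{i ∈ range t | i.bitIndices.length < r}

namespace lowWeightCount

@[simp] lemma zero_left (t : ℕ) : lowWeightCount 0 t = 0 := by simp [lowWeightCount]

@[simp] lemma zero_right (r : ℕ) : lowWeightCount r 0 = 0 := rfl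

lemma succ_right (r t : ℕ) :
    lowWeightCount r (t + 1) =
      lowWeightCount r t + if t.bitIndices.length < r then 1 else 0 := by
  simp only [lowWeightCount, range_add_one, filter_insert]
  split_ifs <;> simp [card_insert_of_notMem]

lemma le_self (r t : ℕ) : lowWeightCount r t ≤ t :=
  (card_filter_le _ _).trans_eq (card_range t)

lemma monotone (r : ℕ) : Monotone (lowWeightCount r) := fun _ _ h =>
  card_le_card (filter_subset_filter _ (range_subset_range.mpr h))

lemma succ_left (r t : ℕ) :
    lowWeightCount (r + 1) t = lowWeightCount (r + 1) ((t + 1) / 2) + lowWeightCount r (t / 2) := by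
  induction t with
  | zero => rfl
  | succ t ih =>
    obtain ⟨j, rfl | rfl⟩ := Nat.even_or_odd' t
    · rw [succ_right, ih, show (2 * j + 1 + 1) / 2 = j + 1 by omega, succ_right,
        show (2 * j + 1) / 2 = j by omega, show 2 * j / 2 = j by omega]
      simp only [Nat.bitIndices_two_mul, List.length_map]
      omega
    · rw [succ_right, ih, show (2 * j + 1 + 1 + 1) / 2 = j + 1 by omega,
        show (2 * j + 1 + 1) / 2 = j + 1 by omega, show (2 * j + 1) / 2 = j by omega, succ_right r]
      simp only [Nat.bitIndices_two_mul_add_one, List.length_cons, List.length_map,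
        Nat.add_lt_add_iff_right]
      omega

lemma two_pow (r s : ℕ) : lowWeightCount r (2 ^ s) = ∑ i ∈ range r, s.choose i := by
  induction s generalizing r with
  | zero => cases r <;> simp [lowWeightCount, range_one, filter_singleton, sum_range_succ']
  | succ s ih =>
    cases r with
    | zero => simp
    | succ r =>
      rw [succ_left, show (2 ^ (s + 1) + 1) / 2 = 2 ^ s by omega,
        show 2 ^ (s + 1) / 2 = 2 ^ s by omega, ih, ih, sum_range_succ' _ r, sum_range_succ']
      simp only [Nat.choose_succ_succ', sum_add_distrib, Nat.choose_zero_right]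
      ring

lemma swap_halves_le (r b : ℕ) :
    lowWeightCount (r + 1) (b / 2) + lowWeightCount r ((b + 1) / 2) ≤ lowWeightCount (r + 1) b := by
  rw [succ_left r b]
  obtain ⟨k, rfl | rfl⟩ := Nat.even_or_odd' b
  · rw [show (2 * k + 1) / 2 = 2 * k / 2 by omega]
  · rw [show (2 * k + 1 + 1) / 2 = k + 1 by omega, show (2 * k + 1) / 2 = k by omega,
      succ_right r, succ_right (r + 1)]
    split_ifs <;> omega

lemma add_le (r : ℕ) {a b : ℕ} (hba : b ≤ a) :
    lowWeightCount (r + 1) (a + b) ≤ lowWeightCount (r + 1) a + lowWeightCount r b := by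
  induction h : a + b using Nat.strong_induction_on generalizing r a b with
  | _ n ih =>
  subst h
  rcases Nat.eq_zero_or_pos b with rfl | hb
  · simp
  rcases hba.eq_or_lt with rfl | hlt
  · rw [succ_left r (b + b), show (b + b + 1) / 2 = b by omega, show (b + b) / 2 = b by omega]
  obtain ⟨u, v, hu, hv, hua, hva, huv⟩ : ∃ u v, (a + b + 1) / 2 ≤ (a + 1) / 2 + u ∧
      (a + b) / 2 ≤ a / 2 + v ∧ u ≤ (a + 1) / 2 ∧ v ≤ a / 2 ∧
      ((u = (b + 1) / 2 ∧ v = b / 2) ∨ (u = b / 2 ∧ v = (b + 1) / 2)) := by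
    rcases Nat.even_or_odd a with ha | ha
    · exact ⟨(b + 1) / 2, b / 2, by grind, by grind, by grind, by grind, .inl ⟨rfl, rfl⟩⟩
    · exact ⟨b / 2, (b + 1) / 2, by grind, by grind, by grind, by grind, .inr ⟨rfl, rfl⟩⟩
  have hF := ih _ (by omega) r hua rfl
  have hG : lowWeightCount r u + lowWeightCount r (a / 2 + v) ≤
      lowWeightCount r (a / 2) + lowWeightCount r b := by
    cases r with
    | zero => simp
    | succ r =>
      have := ih _ (by omega) r hva rfl
      rcases huv with ⟨rfl, rfl⟩ | ⟨rfl, rfl⟩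
      · rw [succ_left r b]; omega
      · have := swap_halves_le r b; omega
  calc lowWeightCount (r + 1) (a + b)
      ≤ lowWeightCount (r + 1) ((a + 1) / 2 + u) + lowWeightCount r (a / 2 + v) := by
        rw [succ_left r (a + b)]; exact add_le_add (monotone _ hu) (monotone _ hv)
    _ ≤ lowWeightCount (r + 1) a + lowWeightCount r b := by rw [succ_left r a]; omega

end lowWeightCount

section LinearAlgebra

variable {K V W W₁ W₂ : Type*} [Field K] [AddCommGroup V] [Module K V] [AddCommGroup W]
  [Module K W] [AddCommGroup W₁] [Module K W₁] [AddCommGroup W₂] [Module K W₂]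

theorem Submodule.finrank_map_add_finrank_inf_ker [FiniteDimensional K V] (p : Submodule K V)
    (f : V →ₗ[K] W) : finrank K (p.map f) + finrank K ↥(p ⊓ LinearMap.ker f) = finrank K p := by
  rw [← LinearMap.range_domRestrict, ← Submodule.map_comap_subtype,
    Submodule.finrank_map_subtype_eq, ← LinearMap.ker_domRestrict, LinearMap.finrank_range_add_finrank_ker]

theorem Submodule.finrank_map_add_finrank_map_le_finrank_map_prod [FiniteDimensional K W₁]
    [FiniteDimensional K W₂] (f : V →ₗ[K] W₁) (g : V →ₗ[K] W₂) {p q : Submodule K V}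
    (hq : q ≤ p ⊓ LinearMap.ker f) :
    finrank K (p.map f) + finrank K (q.map g) ≤ finrank K (p.map (f.prod g)) := by
  set M := p.map (f.prod g)
  have hfst : M.map (LinearMap.fst K W₁ W₂) = p.map f := by
    rw [← Submodule.map_comp]; rfl
  have hsnd : (q.map (f.prod g)).map (LinearMap.snd K W₁ W₂) = q.map g := by
    rw [← Submodule.map_comp]; rfl
  have hker : q.map (f.prod g) ≤ M ⊓ LinearMap.ker (LinearMap.fst K W₁ W₂) := by
    rintro _ ⟨v, hv, rfl⟩
    exact ⟨⟨v, (hq hv).1, rfl⟩, by simpa using (hq hv).2⟩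
  have := M.finrank_map_add_finrank_inf_ker (LinearMap.fst K W₁ W₂)
  rw [hfst] at this
  have := (Submodule.finrank_mono hker).trans' (hsnd ▸ Submodule.finrank_map_le _ _)
  omega

end LinearAlgebra

def restrictₗ (R : Type*) [Semiring R] {α : Type*} (T : Finset α) : (α → R) →ₗ[R] (T → R) :=
  LinearMap.funLeft R R Subtype.val

section BooleanFunctions

variable {σ : Type*}

def monomialFun (A : Finset σ) : (σ → ZMod 2) → ZMod 2 := fun x => ∏ i ∈ A, x i

variable (σ) in
def lowDegreeSpan (r : ℕ) : Submodule (ZMod 2) ((σ → ZMod 2) → ZMod 2) :=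
  Submodule.span (ZMod 2) (monomialFun '' {A | A.card < r})

lemma monomialFun_mem_lowDegreeSpan {A : Finset σ} {r : ℕ} (h : A.card < r) :
    monomialFun A ∈ lowDegreeSpan σ r :=
  Submodule.subset_span ⟨A, h, rfl⟩

lemma coord_mul_monomialFun [DecidableEq σ] (i : σ) (A : Finset σ) :
    (fun x => x i) * monomialFun A = monomialFun (insert i A) := by
  funext x
  by_cases hi : i ∈ A
  · have hidem : ∀ a : ZMod 2, a * a = a := by decide
    simp only [Pi.mul_apply, monomialFun, insert_eq_of_mem hi,
      ← mul_prod_erase A _ hi, ← mul_assoc, hidem]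
  · simp [monomialFun, prod_insert hi]

lemma mul_coord_add_mem_lowDegreeSpan [DecidableEq σ] (i : σ) (c : ZMod 2) {r : ℕ}
    {u : (σ → ZMod 2) → ZMod 2} (hu : u ∈ lowDegreeSpan σ r) :
    (fun x => x i + c) * u ∈ lowDegreeSpan σ (r + 1) := by
  induction hu using Submodule.span_induction with
  | mem _ hA =>
    obtain ⟨A, hA : A.card < r, rfl⟩ := hA
    have hsplit : (fun x => x i + c) * monomialFun A =
        (fun x => x i) * monomialFun A + c • monomialFun A := by
      funext x; simp [add_mul]
    rw [hsplit, coord_mul_monomialFun]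
    exact add_mem (monomialFun_mem_lowDegreeSpan ((card_insert_le _ _).trans_lt
      (by omega))) (Submodule.smul_mem _ _ (monomialFun_mem_lowDegreeSpan (by omega)))
  | zero => simp
  | add _ _ _ _ hu hv => rw [mul_add]; exact add_mem hu hv
  | smul a _ _ hu => rw [mul_smul_comm]; exact Submodule.smul_mem _ a hu

lemma one_le_finrank_map_restrict {T : Finset (σ → ZMod 2)} (hT : T.Nonempty) (r : ℕ) :
    1 ≤ finrank (ZMod 2) ((lowDegreeSpan σ (r + 1)).map (restrictₗ (ZMod 2) T)) := by
  obtain ⟨x, hx⟩ := hT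
  rw [Submodule.one_le_finrank_iff, Submodule.ne_bot_iff]
  refine ⟨_, Submodule.mem_map_of_mem (monomialFun_mem_lowDegreeSpan (A := ∅) (by simp)), ?_⟩
  intro h
  simpa [restrictₗ, monomialFun] using congrFun h ⟨x, hx⟩

lemma exists_coord_fiber_card_le {T : Finset (σ → ZMod 2)} (hT : 1 < T.card) :
    ∃ i c, 0 < (T.filter (· i = c + 1)).card ∧
      (T.filter (· i = c + 1)).card ≤ (T.filter (· i = c)).card := by
  obtain ⟨x, hx, y, hy, hxy⟩ := one_lt_card.mp hT
  obtain ⟨i, hi⟩ := Function.ne_iff.mp hxy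
  have hfiber : ∀ c : ZMod 2, 0 < (T.filter (· i = c)).card := by
    intro c
    have htwo : ∀ a b c : ZMod 2, a ≠ b → a = c ∨ b = c := by decide
    rw [card_pos]
    rcases htwo _ _ c hi with h | h
    · exact ⟨x, mem_filter.mpr ⟨hx, h⟩⟩
    · exact ⟨y, mem_filter.mpr ⟨hy, h⟩⟩
  rcases le_total (T.filter (· i = 1)).card (T.filter (· i = 0)).card with h | h
  · exact ⟨i, 0, by simpa using hfiber 1, by simpa using h⟩
  · exact ⟨i, 1, hfiber _, by simpa [CharTwo.add_self_eq_zero] using h⟩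

lemma finrank_map_restrict_fiber_add_le [DecidableEq σ] (r : ℕ) (T : Finset (σ → ZMod 2)) (i : σ)
    (c : ZMod 2) :
    finrank (ZMod 2) ((lowDegreeSpan σ (r + 1)).map (restrictₗ (ZMod 2) (T.filter (· i = c)))) +
      finrank (ZMod 2) ((lowDegreeSpan σ r).map (restrictₗ (ZMod 2) (T.filter (· i = c + 1)))) ≤
      finrank (ZMod 2) ((lowDegreeSpan σ (r + 1)).map (restrictₗ (ZMod 2) T)) := by
  set resb := restrictₗ (ZMod 2) (T.filter (· i = c))
  set ress := restrictₗ (ZMod 2) (T.filter (· i = c + 1))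
  set mulφ := LinearMap.mulLeft (ZMod 2) fun x : σ → ZMod 2 => x i + c
  have hvanish : resb.comp mulφ = 0 := by
    ext u ⟨x, hx⟩
    simp [resb, restrictₗ, mulφ, (mem_filter.mp hx).2, CharTwo.add_self_eq_zero]
  have hfix : ress.comp mulφ = ress := by
    ext u ⟨x, hx⟩
    simp [ress, restrictₗ, mulφ, (mem_filter.mp hx).2, add_right_comm c 1 c,
      CharTwo.add_self_eq_zero]
  have hq : (lowDegreeSpan σ r).map mulφ ≤ lowDegreeSpan σ (r + 1) ⊓ LinearMap.ker resb := by
    rintro _ ⟨u, hu, rfl⟩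
    exact ⟨mul_coord_add_mem_lowDegreeSpan i c hu, LinearMap.congr_fun hvanish u⟩
  have hprod : resb.prod ress =
      ((LinearMap.funLeft (ZMod 2) (ZMod 2) (Set.inclusion (filter_subset _ T))).prod
        (LinearMap.funLeft (ZMod 2) (ZMod 2) (Set.inclusion (filter_subset _ T)))).comp
        (restrictₗ (ZMod 2) T) := rfl
  calc _ = finrank (ZMod 2) ((lowDegreeSpan σ (r + 1)).map resb) +
        finrank (ZMod 2) (((lowDegreeSpan σ r).map mulφ).map ress) := by
        rw [← Submodule.map_comp, hfix]
    _ ≤ finrank (ZMod 2) ((lowDegreeSpan σ (r + 1)).map (resb.prod ress)) :=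
        Submodule.finrank_map_add_finrank_map_le_finrank_map_prod _ _ hq
    _ ≤ _ := by
        rw [hprod, Submodule.map_comp]
        exact Submodule.finrank_map_le _ _

theorem lowWeightCount_le_finrank_map_restrict [DecidableEq σ] (r : ℕ)
    (T : Finset (σ → ZMod 2)) :
    lowWeightCount r T.card ≤ finrank (ZMod 2) ((lowDegreeSpan σ r).map (restrictₗ (ZMod 2) T)) := by
  induction T using Finset.strongInduction generalizing r with
  | H T ih =>
  cases r with
  | zero => simp
  | succ r =>
  rcases le_or_gt T.card 1 with hT | hT
  · rcases T.eq_empty_or_nonempty with rfl | hne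
    · simp
    · exact ((lowWeightCount.le_self _ _).trans hT).trans (one_le_finrank_map_restrict hne r)
  obtain ⟨i, c, hs, hsb⟩ := exists_coord_fiber_card_le hT
  have hcard : (T.filter (· i = c)).card + (T.filter (· i = c + 1)).card = T.card := by
    rw [← card_filter_add_card_filter_not (p := (· i = c)) (s := T)]
    have : ∀ a c : ZMod 2, a = c + 1 ↔ ¬a = c := by decide
    simp [this]
  have hTb : T.filter (· i = c) ⊂ T := (filter_subset _ T).ssubset_of_ne fun h => by
    rw [h] at hcard; omega
  have hTs : T.filter (· i = c + 1) ⊂ T := (filter_subset _ T).ssubset_of_ne fun h => by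
    rw [h] at hcard; omega
  calc lowWeightCount (r + 1) T.card
      ≤ lowWeightCount (r + 1) (T.filter (· i = c)).card +
          lowWeightCount r (T.filter (· i = c + 1)).card :=
        hcard ▸ lowWeightCount.add_le r hsb
    _ ≤ _ := add_le_add (ih _ hTb (r + 1)) (ih _ hTs r)
    _ ≤ _ := finrank_map_restrict_fiber_add_le r T i c

lemma card_filter_card_lt [Fintype σ] (r : ℕ) :
    #{A : Finset σ | A.card < r} = ∑ i ∈ range r, (Fintype.card σ).choose i := by
  rw [card_eq_sum_card_fiberwise (f := card) (t := range r) fun A hA => by simpa using hA]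
  refine sum_congr rfl fun i hi => ?_
  rw [filter_filter, ← card_univ, ← card_powersetCard]
  congr 1
  ext A
  simp only [mem_filter, mem_univ, true_and, mem_powersetCard, subset_univ, and_iff_right_iff_imp]
  rintro rfl
  exact mem_range.mp hi

lemma finrank_lowDegreeSpan_le [Fintype σ] (r : ℕ) :
    finrank (ZMod 2) (lowDegreeSpan σ r) ≤ ∑ i ∈ range r, (Fintype.card σ).choose i := by
  rw [← card_filter_card_lt, ← Fintype.card_subtype]
  have := finrank_range_le_card (R := ZMod 2)
    fun A : {A : Finset σ // A.card < r} => monomialFun A.1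
  rwa [lowDegreeSpan, Set.image_eq_range]

lemma pow_eq_self_zmod_two (a : ZMod 2) {n : ℕ} (hn : n ≠ 0) : a ^ n = a := by
  fin_cases a
  · exact zero_pow hn
  · exact one_pow n

lemma aeval_mem_lowDegreeSpan {r : ℕ} {p : MvPolynomial σ (ZMod 2)} (hp : p.totalDegree ≤ r) :
    (fun x => MvPolynomial.aeval x p) ∈ lowDegreeSpan σ (r + 1) := by
  have hsum : (fun x => MvPolynomial.aeval x p) =
      ∑ d ∈ p.support, p.coeff d • monomialFun d.support := by
    ext x
    conv_lhs => rw [p.as_sum]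
    simp only [map_sum, MvPolynomial.aeval_monomial, Finsupp.prod, Finset.sum_apply]
    refine sum_congr rfl fun d _ => ?_
    simp only [Algebra.algebraMap_self, RingHom.id_apply, Pi.smul_apply, smul_eq_mul, monomialFun]
    congr 1
    exact prod_congr rfl fun i hi => pow_eq_self_zmod_two _ (Finsupp.mem_support_iff.mp hi)
  rw [hsum]
  refine Submodule.sum_mem _ fun d hd => Submodule.smul_mem _ _ (monomialFun_mem_lowDegreeSpan ?_)
  calc d.support.card = ∑ i ∈ d.support, 1 := card_eq_sum_ones _
    _ ≤ d.sum fun _ e => e :=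
        sum_le_sum fun i hi => Nat.one_le_iff_ne_zero.mpr (Finsupp.mem_support_iff.mp hi)
    _ ≤ p.totalDegree := MvPolynomial.le_totalDegree hd
    _ < r + 1 := Nat.lt_succ_of_le hp

end BooleanFunctions

lemma bitRepr_injective (m : ℕ) : Function.Injective fun s : Fin (2 ^ m) => bitRepr m s := by
  intro s t h
  refine Fin.ext (Nat.eq_of_testBit_eq fun i => ?_)
  by_cases hi : i < m
  · have := congrFun h ⟨m - 1 - i, by omega⟩
    simp only [bitRepr, show m - 1 - (m - 1 - i) = i by omega] at this
    revert this
    cases s.1.testBit i <;> cases t.1.testBit i <;> simp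
  · rw [Nat.testBit_lt_two_pow (s.2.trans_le (Nat.pow_le_pow_right two_pos (not_lt.mp hi))),
      Nat.testBit_lt_two_pow (t.2.trans_le (Nat.pow_le_pow_right two_pos (not_lt.mp hi)))]

def bitsPullback (m : ℕ) : ((Fin m → ZMod 2) → ZMod 2) →ₗ[ZMod 2] (Fin (2 ^ m) → ZMod 2) :=
  LinearMap.funLeft (ZMod 2) (ZMod 2) fun s => bitRepr m s

lemma map_lowDegreeSpan_bitsPullback (m r : ℕ) :
    (lowDegreeSpan (Fin m) (r + 1)).map (bitsPullback m) = RM m r := by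
  apply le_antisymm
  · rw [lowDegreeSpan, Submodule.map_span, Submodule.span_le]
    rintro _ ⟨_, ⟨A, hA : A.card < r + 1, rfl⟩, rfl⟩
    refine ⟨∏ i ∈ A, MvPolynomial.X i, ?_, ?_⟩
    · rw [SetLike.mem_coe, MvPolynomial.mem_restrictTotalDegree]
      refine (MvPolynomial.totalDegree_finsetProd _ _).trans ?_
      simp only [MvPolynomial.totalDegree_X, sum_const, smul_eq_mul, mul_one]
      omega
    · ext s
      simp [evalRM, bitsPullback, monomialFun]
  · rintro _ ⟨p, hp, rfl⟩
    exact ⟨_, aeval_mem_lowDegreeSpan ((MvPolynomial.mem_restrictTotalDegree _ _ _).mp hp), rfl⟩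

lemma finrank_RM_le (m r : ℕ) : finrank (ZMod 2) (RM m r) ≤ ∑ i ∈ range (r + 1), m.choose i := by
  rw [← map_lowDegreeSpan_bitsPullback]
  exact (Submodule.finrank_map_le _ _).trans
    ((finrank_lowDegreeSpan_le _).trans_eq (by rw [Fintype.card_fin]))

lemma lowWeightCount_le_finrank_map_restrict_RM (m r : ℕ) (T : Finset (Fin (2 ^ m))) :
    lowWeightCount (r + 1) T.card ≤ finrank (ZMod 2) ((RM m r).map (restrictₗ (ZMod 2) T)) := by
  set T' := T.image fun s : Fin (2 ^ m) => bitRepr m s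
  have hcard : T'.card = T.card := card_image_of_injective _ (bitRepr_injective m)
  set θ : T → T' := fun s => ⟨bitRepr m s, mem_image_of_mem _ s.2⟩
  have hθ : Function.Surjective θ := by
    rintro ⟨_, hx⟩
    obtain ⟨s, hs, rfl⟩ := mem_image.mp hx
    exact ⟨⟨s, hs⟩, rfl⟩
  have hcomp : (restrictₗ (ZMod 2) T).comp (bitsPullback m) =
      (LinearMap.funLeft (ZMod 2) (ZMod 2) θ).comp (restrictₗ (ZMod 2) T') := rfl
  have hinj := LinearMap.funLeft_injective_of_surjective (ZMod 2) (ZMod 2) θ hθ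
  rw [← map_lowDegreeSpan_bitsPullback, ← Submodule.map_comp, hcomp, Submodule.map_comp,
    ← (Submodule.equivMapOfInjective _ hinj _).finrank_eq, ← hcard]
  exact lowWeightCount_le_finrank_map_restrict (r + 1) T'

lemma ncard_supp_subset_le {ι : Type*} [Fintype ι] (C : Submodule (ZMod 2) (ι → ZMod 2))
    {g : ι → ZMod 2} (hg : g ∈ C) :
    {h | h ∈ C ∧ ∀ s, g s = 1 → h s = 1}.ncard ≤
      2 ^ (finrank (ZMod 2) C - finrank (ZMod 2) (C.map (restrictₗ (ZMod 2) {s | g s ≠ 0}))) := by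
  set C₀ := C ⊓ LinearMap.ker (restrictₗ (ZMod 2) {s | g s ≠ 0})
  have hmaps : ∀ h ∈ {h | h ∈ C ∧ ∀ s, g s = 1 → h s = 1}, h + g ∈ (C₀ : Set (ι → ZMod 2)) := by
    rintro h ⟨hC, hsupp⟩
    refine ⟨add_mem hC hg, ?_⟩
    ext ⟨s, hs⟩
    have hbool : ∀ a : ZMod 2, a ≠ 0 → a = 1 := by decide
    have hgs : g s = 1 := hbool _ (mem_filter.mp hs).2
    simp [restrictₗ, hgs, hsupp s hgs, CharTwo.add_self_eq_zero]
  calc _ ≤ (C₀ : Set (ι → ZMod 2)).ncard :=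
        Set.ncard_le_ncard_of_injOn _ hmaps (add_left_injective g).injOn
    _ = 2 ^ finrank (ZMod 2) C₀ := by
        rw [← Nat.card_coe_set_eq, SetLike.coe_sort_coe,
          Module.natCard_eq_pow_finrank (K := ZMod 2), Nat.card_zmod]
    _ = _ := by rw [← C.finrank_map_add_finrank_inf_ker (restrictₗ (ZMod 2) {s | g s ≠ 0}),
        Nat.add_sub_cancel_left]

theorem stmt18_general (m r u : ℕ)
    (g : Fin (2 ^ m) → ZMod 2) (hg : g ∈ RM m r)
    (hw : 2 ^ (m - u) ≤ hammingNorm g) :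
    {h : Fin (2 ^ m) → ZMod 2 | h ∈ RM m r ∧ ∀ s : Fin (2 ^ m), g s = 1 → h s = 1}.ncard ≤
      2 ^ ((∑ i ∈ Finset.range (r + 1), m.choose i) -
            ∑ i ∈ Finset.range (r + 1), (m - u).choose i) := by
  have hupper := finrank_RM_le m r
  have hlower : ∑ i ∈ range (r + 1), (m - u).choose i ≤
      finrank (ZMod 2) ((RM m r).map (restrictₗ (ZMod 2) {s | g s ≠ 0})) := by
    rw [← lowWeightCount.two_pow]
    exact (lowWeightCount.monotone _ hw).trans (lowWeightCount_le_finrank_map_restrict_RM m r _)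
  exact (ncard_supp_subset_le _ hg).trans (Nat.pow_le_pow_right two_pos (by omega))

/-- Let g ∈ RM(m,r) have Hamming weight w ≥ 2^{m−u} (0 ≤ u ≤ m). Then the
number of codewords h ∈ RM(m,r) with supp(g) ⊆ supp(h) is at most
2^{C(m,≤r) − C(m−u,≤r)}. -/
theorem stmt18 (m r u : ℕ) (hm : 1 ≤ m) (hr : r ≤ m) (hu : u ≤ m)
    (g : Fin (2 ^ m) → ZMod 2) (hg : g ∈ RM m r)
    (hw : 2 ^ (m - u) ≤ hammingNorm g) :
    {h : Fin (2 ^ m) → ZMod 2 | h ∈ RM m r ∧ ∀ s : Fin (2 ^ m), g s = 1 → h s = 1}.ncard ≤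
      2 ^ ((∑ i ∈ Finset.range (r + 1), m.choose i) -
            ∑ i ∈ Finset.range (r + 1), (m - u).choose i) :=
  stmt18_general m r u g hg hw
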